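/- arXiv:2507.00609 — 5 statements merged into one kernel-verified Lean document; each statement's English description precedes it below -/
import Mathlib

section
/- Let L/K be a field extension and M ∈ M_n(K) a cyclic matrix with minimal polynomial f. Let g ∈ L[x] be a monic divisor of f of degree n−k, and write f = gh. Let v ∈ K^n be a cyclic vector for M. Then the M-cyclic code C_g = {v g(M)ᵗ P(M)ᵗ : P ∈ L[x]} equals the kernel {c ∈ L^n : c h(M)ᵗ = 0}, and dim_L(C_g) = k. -/
/-!
Base change to `L` keeps `v` cyclic, so `P ↦ P(M) v` maps `L[X]` onto `L^n`; its kernel is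
`(f)`, since a nonzero polynomial of degree `< n` would give a linear relation among the `n`
spanning vectors `Mⁱ v`. Hence `f` also stays the minimal polynomial over `L`, and `c = Q(M) v`
lies in `ker h(M)` iff `gh ∣ hQ`, i.e. iff `g ∣ Q`. Reducing `P` modulo `h` shows that
`P ↦ (gP)(M) v` maps the polynomials of degree `< deg h = k` isomorphically onto `C_g`.
-/

open Polynomial Matrix

theorem Submodule.span_range_algebraMap_comp_eq_top {K L ι m : Type*} [Field K] [Field L]
    [Algebra K L] [Finite m] {u : ι → m → K} (hu : Submodule.span K (Set.range u) = ⊤) :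
    Submodule.span L (Set.range fun i => algebraMap K L ∘ u i) = ⊤ := by
  classical
  have hφ (x : m → K) :
      algebraMap K L ∘ x ∈ Submodule.span L (Set.range fun i => algebraMap K L ∘ u i) := by
    have hx := Submodule.mem_map_of_mem (f := LinearMap.compLeft (Algebra.linearMap K L) m)
      (hu ▸ Submodule.mem_top : x ∈ Submodule.span K (Set.range u))
    rw [Submodule.map_span, ← Set.range_comp] at hx
    exact Submodule.span_le_restrictScalars K L _ hx
  rw [eq_top_iff, ← (Pi.basisFun L m).span_eq, Submodule.span_le]
  rintro _ ⟨j, rfl⟩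
  have hj : algebraMap K L ∘ Pi.single j 1 = Pi.basisFun L m j := by
    ext j'
    simp [Pi.single_apply, apply_ite (algebraMap K L)]
  exact hj ▸ hφ (Pi.single j 1)

namespace Matrix

section

variable {L : Type*} [Field L] {n : ℕ}

def IsCyclicVector (N : Matrix (Fin n) (Fin n) L) (w : Fin n → L) : Prop :=
  Submodule.span L (Set.range fun i : Fin n => (N ^ (i : ℕ)) *ᵥ w) = ⊤

noncomputable def aevalMulVec (N : Matrix (Fin n) (Fin n) L) (w : Fin n → L) :
    L[X] →ₗ[L] Fin n → L where
  toFun P := aeval N P *ᵥ w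
  map_add' P Q := by rw [map_add, add_mulVec]
  map_smul' c P := by rw [map_smul, smul_mulVec, RingHom.id_apply]

variable (N : Matrix (Fin n) (Fin n) L) (w : Fin n → L)

@[simp]
theorem aevalMulVec_apply (P : L[X]) : aevalMulVec N w P = aeval N P *ᵥ w := rfl

theorem aevalMulVec_mul (P Q : L[X]) :
    aevalMulVec N w (P * Q) = aeval N P *ᵥ aevalMulVec N w Q := by
  simp [mulVec_mulVec]

theorem aevalMulVec_minpoly_mul (P : L[X]) : aevalMulVec N w (minpoly L N * P) = 0 := by
  rw [aevalMulVec_mul, minpoly.aeval, zero_mulVec]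

variable {N w}

theorem IsCyclicVector.surjective_aevalMulVec_degreeLT (hw : IsCyclicVector N w) :
    Function.Surjective (aevalMulVec N w ∘ₗ (degreeLT L n).subtype) := by
  rw [← LinearMap.range_eq_top, eq_top_iff, ← hw, Submodule.span_le]
  rintro _ ⟨i, rfl⟩
  exact ⟨⟨X ^ (i : ℕ), mem_degreeLT.2 (by simp)⟩, by simp⟩

theorem IsCyclicVector.injective_aevalMulVec_degreeLT (hw : IsCyclicVector N w) :
    Function.Injective (aevalMulVec N w ∘ₗ (degreeLT L n).subtype) :=
  (LinearMap.injective_iff_surjective_of_finrank_eq_finrank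
    (by simp [(degreeLTEquiv L n).finrank_eq])).2 hw.surjective_aevalMulVec_degreeLT

theorem IsCyclicVector.surjective_aevalMulVec (hw : IsCyclicVector N w) :
    Function.Surjective (aevalMulVec N w) :=
  .of_comp (g := (degreeLT L n).subtype) hw.surjective_aevalMulVec_degreeLT

theorem IsCyclicVector.eq_zero_of_aevalMulVec_eq_zero (hw : IsCyclicVector N w) {P : L[X]}
    (hP : P.degree < n) (h0 : aevalMulVec N w P = 0) : P = 0 := by
  have : (⟨P, mem_degreeLT.2 hP⟩ : degreeLT L n) = 0 :=
    hw.injective_aevalMulVec_degreeLT (by simpa using h0)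
  simpa using congrArg Subtype.val this

theorem IsCyclicVector.natDegree_minpoly (hw : IsCyclicVector N w) :
    (minpoly L N).natDegree = n := by
  have hN : IsIntegral L N := .of_finite L N
  refine le_antisymm ?_ (not_lt.1 fun hlt => minpoly.ne_zero hN ?_)
  · simpa using natDegree_le_of_dvd (minpoly_dvd_charpoly N) (charpoly_monic N).ne_zero
  · refine hw.eq_zero_of_aevalMulVec_eq_zero ?_ (by simp)
    exact (natDegree_lt_iff_degree_lt (minpoly.ne_zero hN)).1 hlt

theorem IsCyclicVector.aevalMulVec_eq_zero_iff (hw : IsCyclicVector N w) {P : L[X]} :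
    aevalMulVec N w P = 0 ↔ minpoly L N ∣ P := by
  refine ⟨fun h0 => ?_, fun ⟨Q, hQ⟩ => hQ ▸ aevalMulVec_minpoly_mul N w Q⟩
  have hN : minpoly L N ≠ 0 := minpoly.ne_zero (.of_finite L N)
  have hmod : aevalMulVec N w (P % minpoly L N) = 0 := by
    rw [← h0, ← EuclideanDomain.mod_add_div P (minpoly L N), map_add, aevalMulVec_minpoly_mul,
      add_zero, EuclideanDomain.mod_add_div]
  refine EuclideanDomain.mod_eq_zero.1 (hw.eq_zero_of_aevalMulVec_eq_zero ?_ hmod)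
  simpa [degree_eq_natDegree hN, hw.natDegree_minpoly] using degree_mod_lt P hN

variable (N w) in
noncomputable def cyclicCode (g : L[X]) : Submodule L (Fin n → L) :=
  LinearMap.range (aevalMulVec N w ∘ₗ LinearMap.mulLeft L g)

theorem mem_cyclicCode {g : L[X]} {c : Fin n → L} :
    c ∈ cyclicCode N w g ↔ ∃ P, aevalMulVec N w (g * P) = c := Iff.rfl

variable {g h : L[X]}

theorem IsCyclicVector.cyclicCode_eq_ker (hw : IsCyclicVector N w) (hgh : minpoly L N = g * h) :
    cyclicCode N w g = LinearMap.ker (aeval N h).mulVecLin := by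
  have hh : h ≠ 0 := right_ne_zero_of_mul (hgh ▸ minpoly.ne_zero (.of_finite L N))
  ext c
  obtain ⟨Q, rfl⟩ := hw.surjective_aevalMulVec c
  rw [mem_cyclicCode, LinearMap.mem_ker, mulVecLin_apply, ← aevalMulVec_mul,
    hw.aevalMulVec_eq_zero_iff, hgh, mul_comm g, mul_dvd_mul_iff_left hh]
  refine ⟨fun ⟨P, hP⟩ => ?_, fun ⟨P, hP⟩ => ⟨P, hP ▸ rfl⟩⟩
  rw [← sub_eq_zero, ← map_sub, hw.aevalMulVec_eq_zero_iff, hgh] at hP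
  simpa using dvd_add (dvd_mul_right g P) (dvd_sub_comm.1 (dvd_of_mul_right_dvd hP))

theorem IsCyclicVector.finrank_cyclicCode (hw : IsCyclicVector N w) (hgh : minpoly L N = g * h) :
    Module.finrank L (cyclicCode N w g) = h.natDegree := by
  have hgh0 : g * h ≠ 0 := hgh ▸ minpoly.ne_zero (.of_finite L N)
  have hh : h ≠ 0 := right_ne_zero_of_mul hgh0
  set φ := (aevalMulVec N w ∘ₗ LinearMap.mulLeft L g) ∘ₗ (degreeLT L h.natDegree).subtype
  have hrange : LinearMap.range φ = cyclicCode N w g := by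
    refine le_antisymm (LinearMap.range_comp_le_range _ _) fun c ⟨P, hP⟩ => ?_
    refine ⟨⟨P % h, mem_degreeLT.2 ?_⟩, ?_⟩
    · simpa [degree_eq_natDegree hh] using degree_mod_lt P hh
    · show aevalMulVec N w (g * (P % h)) = c
      rw [← hP, LinearMap.comp_apply, LinearMap.mulLeft_apply]
      conv_rhs => rw [← EuclideanDomain.mod_add_div P h]
      rw [mul_add, ← mul_assoc, ← hgh, map_add, aevalMulVec_minpoly_mul, add_zero]
  have hinj : Function.Injective φ := by
    rw [← LinearMap.ker_eq_bot, Submodule.eq_bot_iff]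
    rintro ⟨P, hP⟩ h0
    have hdvd : h ∣ P := by
      rwa [LinearMap.mem_ker, LinearMap.comp_apply, LinearMap.comp_apply, Submodule.subtype_apply,
        LinearMap.mulLeft_apply, hw.aevalMulVec_eq_zero_iff, hgh,
        mul_dvd_mul_iff_left (left_ne_zero_of_mul hgh0)] at h0
    refine Subtype.ext (eq_zero_of_dvd_of_degree_lt hdvd ?_)
    simpa [degree_eq_natDegree hh] using mem_degreeLT.1 hP
  rw [← hrange, LinearMap.finrank_range_of_inj hinj, (degreeLTEquiv L _).finrank_eq,
    Module.finrank_fin_fun]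

end

section

variable {K L : Type*} [Field K] [Field L] [Algebra K L] {n : ℕ}
  {M : Matrix (Fin n) (Fin n) K} {v : Fin n → K}

theorem IsCyclicVector.map (hv : IsCyclicVector M v) :
    IsCyclicVector (M.map (algebraMap K L)) (algebraMap K L ∘ v) := by
  have hpow (i : ℕ) : (M.map (algebraMap K L) ^ i) *ᵥ (algebraMap K L ∘ v) =
      algebraMap K L ∘ (M ^ i *ᵥ v) := by
    ext j
    rw [← Matrix.map_pow]
    exact (RingHom.map_mulVec (algebraMap K L) _ v j).symm
  simp only [IsCyclicVector, hpow]
  exact Submodule.span_range_algebraMap_comp_eq_top hv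

theorem IsCyclicVector.minpoly_map (hv : IsCyclicVector M v) :
    minpoly L (M.map (algebraMap K L)) = (minpoly K M).map (algebraMap K L) := by
  have hM : IsIntegral K M := .of_finite K M
  refine (minpoly.unique_of_degree_le_degree_minpoly _ _ ((minpoly.monic hM).map _) ?_ ?_).symm
  · rw [aeval_map_algebraMap,
      show M.map (algebraMap K L) = (Algebra.ofId K L).mapMatrix M from rfl,
      aeval_algHom_apply, minpoly.aeval, map_zero]
  · rw [degree_map, degree_eq_natDegree (minpoly.ne_zero hM),
      degree_eq_natDegree (minpoly.ne_zero (.of_finite L _)), hv.natDegree_minpoly,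
      hv.map.natDegree_minpoly]

end

end Matrix

theorem stmt5_general {K L : Type*} [Field K] [Field L] [Algebra K L] {n k : ℕ}
    (M : Matrix (Fin n) (Fin n) K) (v : Fin n → K)
    (hv : Submodule.span K (Set.range fun i : Fin n => (M ^ (i : ℕ)).mulVec v) = ⊤)
    (g h : Polynomial L)
    (hk : k ≤ n) (hdeg : g.natDegree = n - k)
    (hf : (minpoly K M).map (algebraMap K L) = g * h)
    (Cg : Submodule L (Fin n → L))
    (hCg : (Cg : Set (Fin n → L)) = {c : Fin n → L | ∃ P : Polynomial L,
      c = (Polynomial.aeval (M.map (algebraMap K L)) (g * P)).mulVec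
        (fun j => algebraMap K L (v j))}) :
    Cg = LinearMap.ker (Matrix.mulVecLin (Polynomial.aeval (M.map (algebraMap K L)) h)) ∧
    Module.finrank L Cg = k := by
  have hw : IsCyclicVector (M.map (algebraMap K L)) (algebraMap K L ∘ v) := IsCyclicVector.map hv
  have hgh : minpoly L (M.map (algebraMap K L)) = g * h := (IsCyclicVector.minpoly_map hv).trans hf
  obtain rfl : Cg = cyclicCode (M.map (algebraMap K L)) (algebraMap K L ∘ v) g := by
    refine SetLike.coe_injective (hCg.trans ?_)
    ext c
    simp [mem_cyclicCode, eq_comm, Function.comp_def]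
  have hgh0 : g * h ≠ 0 := hgh ▸ minpoly.ne_zero (.of_finite L _)
  have hhk : h.natDegree = k := by
    have hn := hw.natDegree_minpoly
    rw [hgh, natDegree_mul (left_ne_zero_of_mul hgh0) (right_ne_zero_of_mul hgh0), hdeg] at hn
    omega
  exact ⟨hw.cyclicCode_eq_ker hgh, hw.finrank_cyclicCode hgh |>.trans hhk⟩

/-- For a cyclic matrix `M` with minimal polynomial `f` of degree `n`, cyclic vector
`v ∈ K^n`, and a monic divisor `g` of `f` in `L[x]` of degree `n-k` with `f = g h`,
the `M`-cyclic code `C_g = {v g(M)ᵗ P(M)ᵗ : P ∈ L[x]}` equals `ker(h(M))` in `L^n`,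
and `dim_L C_g = k`. -/
theorem stmt5 {K L : Type*} [Field K] [Field L] [Algebra K L] {n k : ℕ}
    (M : Matrix (Fin n) (Fin n) K) (v : Fin n → K)
    (hv : Submodule.span K (Set.range fun i : Fin n => (M ^ (i : ℕ)).mulVec v) = ⊤)
    (g h : Polynomial L) (hgmonic : g.Monic)
    (hk : k ≤ n) (hdeg : g.natDegree = n - k)
    (hf : (minpoly K M).map (algebraMap K L) = g * h)
    (Cg : Submodule L (Fin n → L))
    (hCg : (Cg : Set (Fin n → L)) = {c : Fin n → L | ∃ P : Polynomial L,
      c = (Polynomial.aeval (M.map (algebraMap K L)) (g * P)).mulVec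
        (fun j => algebraMap K L (v j))}) :
    Cg = LinearMap.ker (Matrix.mulVecLin (Polynomial.aeval (M.map (algebraMap K L)) h)) ∧
    Module.finrank L Cg = k :=
  stmt5_general M v hv g h hk hdeg hf Cg hCg
end

section
/- Let L/K be a field extension, and let f = f₁^{m₁}⋯f_s^{m_s} ∈ K[x] with f_i pairwise distinct monic irreducible in K[x]. Let g ∈ L[x] be a monic divisor of f and write g = g₁⋯g_s with g_i | f_i^{m_i} in L[x]. For each i let ℓ_i = 0 if g_i = 1, and otherwise ℓ_i = min{ℓ ∈ [1,m_i] : g_i | f_i^ℓ}. Then g·L[x] ∩ K[x] = (∏_{i=1}^s f_i^{ℓ_i})·K[x]. -/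
/-!
Distinct monic irreducibles are coprime, hence so are the `gᵢ`, and both divisibility conditions
split into conditions on the single factors. If `gᵢ ∣ p` and `fᵢ ^ n` is the exact power of `fᵢ`
in `p`, the cofactor is coprime to `fᵢ`, so `gᵢ ∣ fᵢ ^ n` and minimality gives `ℓᵢ ≤ n`.
-/

open Polynomial

theorem exists_pow_dvd_and_dvd_map_pow {R S : Type*} [CommRing R] [IsBezout R] [WfDvdMonoid R]
    [CommRing S] (φ : R →+* S) {q a : R} {h : S} {M : ℕ} (hq : Irreducible q) (ha : a ≠ 0)
    (hM : h ∣ φ q ^ M) (hh : h ∣ φ a) : ∃ n, q ^ n ∣ a ∧ h ∣ φ q ^ n := by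
  obtain ⟨n, r, hqr, rfl⟩ := WfDvdMonoid.max_power_factor ha hq
  have hcop : IsCoprime h (φ r) :=
    ((hq.coprime_iff_not_dvd.2 hqr).map φ).pow_left.of_isCoprime_of_dvd_left hM
  rw [map_mul, map_pow] at hh
  exact ⟨n, dvd_mul_right _ _, hcop.dvd_of_dvd_mul_right hh⟩

theorem Polynomial.isCoprime_of_monic_of_irreducible_of_ne {K : Type*} [Field K] {p q : K[X]}
    (hp : p.Monic) (hq : q.Monic) (hpi : Irreducible p) (hqi : Irreducible q) (hne : p ≠ q) :
    IsCoprime p q :=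
  hpi.coprime_iff_not_dvd.2 fun hdvd =>
    hne (eq_of_monic_of_associated hp hq (hpi.associated_of_dvd hqi hdvd))

theorem stmt6_general {K L : Type*} [Field K] [Field L] [Algebra K L] {s : ℕ}
    (f : Fin s → Polynomial K) (m : Fin s → ℕ)
    (hmonic : ∀ i, (f i).Monic) (hirr : ∀ i, Irreducible (f i))
    (hdist : Function.Injective f)
    (g : Polynomial L)
    (gi : Fin s → Polynomial L) (hgimonic : ∀ i, (gi i).Monic)
    (hgprod : g = ∏ i, gi i)
    (hgi : ∀ i, gi i ∣ ((f i).map (algebraMap K L)) ^ m i)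
    (ℓ : Fin s → ℕ)
    (hℓ0 : ∀ i, gi i = 1 → ℓ i = 0)
    (hℓ1 : ∀ i, gi i ≠ 1 →
      1 ≤ ℓ i ∧ ℓ i ≤ m i ∧ gi i ∣ ((f i).map (algebraMap K L)) ^ ℓ i ∧
      ∀ l, 1 ≤ l → gi i ∣ ((f i).map (algebraMap K L)) ^ l → ℓ i ≤ l) :
    ∀ p : Polynomial K,
      g ∣ p.map (algebraMap K L) ↔ (∏ i, f i ^ ℓ i) ∣ p := by
  set φ := mapRingHom (algebraMap K L)
  have hcop : Pairwise fun i j => IsCoprime (f i) (f j) := fun i j hij =>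
    isCoprime_of_monic_of_irreducible_of_ne (hmonic i) (hmonic j) (hirr i) (hirr j) (hdist.ne hij)
  have hgcop : Pairwise fun i j => IsCoprime (gi i) (gi j) := fun i j hij =>
    (((hcop hij).map φ).pow.of_isCoprime_of_dvd_left (hgi i)).of_isCoprime_of_dvd_right (hgi j)
  have hgi_dvd_ℓ : ∀ i, gi i ∣ φ (f i) ^ ℓ i := fun i => by
    by_cases h1 : gi i = 1
    · simp [h1]
    · exact (hℓ1 i h1).2.2.1
  have hℓ_le : ∀ i n, gi i ∣ φ (f i) ^ n → ℓ i ≤ n := fun i n hn => by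
    by_cases h1 : gi i = 1
    · simp [hℓ0 i h1]
    · refine (hℓ1 i h1).2.2.2 n (Nat.one_le_iff_ne_zero.2 fun hn0 => h1 ?_) hn
      rw [hn0, pow_zero] at hn
      exact (hgimonic i).eq_one_of_isUnit (isUnit_of_dvd_one hn)
  intro p
  constructor
  · intro hgp
    refine Finset.prod_dvd_of_coprime (fun i _ j _ hij => (hcop hij).pow) fun i _ => ?_
    rcases eq_or_ne p 0 with rfl | hp
    · exact dvd_zero _
    have hgi_p : gi i ∣ φ p := (hgprod ▸ Finset.dvd_prod_of_mem gi (Finset.mem_univ i)).trans hgp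
    obtain ⟨n, hn, hgn⟩ := exists_pow_dvd_and_dvd_map_pow φ (hirr i) hp (hgi i) hgi_p
    exact (pow_dvd_pow _ (hℓ_le i n hgn)).trans hn
  · intro hfp
    rw [hgprod]
    refine Finset.prod_dvd_of_coprime (fun i _ j _ hij => hgcop hij) fun i _ => ?_
    have hfi : f i ^ ℓ i ∣ p :=
      (Finset.dvd_prod_of_mem (fun j => f j ^ ℓ j) (Finset.mem_univ i)).trans hfp
    exact (hgi_dvd_ℓ i).trans (by rw [← map_pow]; exact map_dvd φ hfi)

/-- Let `f = f₁^{m₁}⋯f_s^{m_s} ∈ K[x]` with `fᵢ` pairwise distinct monic irreducible,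
`g ∈ L[x]` a monic divisor of `f` written `g = g₁⋯g_s` with `gᵢ ∣ fᵢ^{mᵢ}` in `L[x]`,
and `ℓᵢ = 0` if `gᵢ = 1`, `ℓᵢ = min{ℓ ∈ [1,mᵢ] : gᵢ ∣ fᵢ^ℓ}` otherwise. Then
`g·L[x] ∩ K[x] = (∏ᵢ fᵢ^{ℓᵢ})·K[x]`. -/
theorem stmt6 {K L : Type*} [Field K] [Field L] [Algebra K L] {s : ℕ}
    (f : Fin s → Polynomial K) (m : Fin s → ℕ)
    (hmonic : ∀ i, (f i).Monic) (hirr : ∀ i, Irreducible (f i))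
    (hdist : Function.Injective f) (hm : ∀ i, 1 ≤ m i)
    (g : Polynomial L) (hgmonic : g.Monic)
    (hgdvd : g ∣ (∏ i, f i ^ m i).map (algebraMap K L))
    (gi : Fin s → Polynomial L) (hgimonic : ∀ i, (gi i).Monic)
    (hgprod : g = ∏ i, gi i)
    (hgi : ∀ i, gi i ∣ ((f i).map (algebraMap K L)) ^ m i)
    (ℓ : Fin s → ℕ)
    (hℓ0 : ∀ i, gi i = 1 → ℓ i = 0)
    (hℓ1 : ∀ i, gi i ≠ 1 →
      1 ≤ ℓ i ∧ ℓ i ≤ m i ∧ gi i ∣ ((f i).map (algebraMap K L)) ^ ℓ i ∧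
      ∀ l, 1 ≤ l → gi i ∣ ((f i).map (algebraMap K L)) ^ l → ℓ i ≤ l) :
    ∀ p : Polynomial K,
      g ∣ p.map (algebraMap K L) ↔ (∏ i, f i ^ ℓ i) ∣ p :=
  stmt6_general f m hmonic hirr hdist g gi hgimonic hgprod hgi ℓ hℓ0 hℓ1
end

section
/- Let L/K be a field extension and M ∈ M_n(K) a cyclic matrix with minimal polynomial f = f₁^{m₁}⋯f_s^{m_s} (f_i pairwise distinct monic irreducible over K). Let g ∈ L[x] be a monic divisor of f, written g = g₁⋯g_s with g_i | f_i^{m_i}. Then the M-cyclic code C_g contains a nonzero vector of K^n if and only if there exists i with g_i | f_i^{m_i − 1}. -/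
/-!
Because `v` is a cyclic vector, the Krylov matrix with columns `v, Mv, …, M^{n-1}v` is invertible,
over `K` and hence over `L`. So `P(M)v = 0` iff the minimal polynomial `F` of `M` divides `P`,
over both fields, and every vector of `K^n` is `Q(M)v` for some `Q ∈ K[X]`. Thus `C_g` contains a
nonzero vector of `K^n` iff `g ∣ Q` for some `Q ∈ K[X]` with `F ∤ Q`.
Such a `Q` is not divisible by some `fᵢ^{mᵢ}`: writing `Q = fᵢ^a R` with `a < mᵢ` and `fᵢ ∤ R`,
`gᵢ` is coprime to `R` and therefore divides `fᵢ^a`. Conversely `Q = F / fᵢ` works when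
`gᵢ ∣ fᵢ^{mᵢ-1}`.
-/

open Polynomial Matrix

section Krylov

variable {R : Type*} [CommRing R] {n : ℕ} (N : Matrix (Fin n) (Fin n) R) (w : Fin n → R)

def krylov : Matrix (Fin n) (Fin n) R :=
  Matrix.of fun i j => (N ^ (j : ℕ) *ᵥ w) i

theorem krylov_mulVec (c : Fin n → R) :
    krylov N w *ᵥ c = ∑ j, c j • (N ^ (j : ℕ) *ᵥ w) := by
  ext i
  simp [krylov, mulVec, dotProduct, Finset.sum_apply, mul_comm]

theorem aeval_mulVec_eq_krylov_mulVec {P : R[X]} (hP : P.natDegree < n) :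
    aeval N P *ᵥ w = krylov N w *ᵥ fun j => P.coeff j := by
  rw [krylov_mulVec, aeval_eq_sum_range' hP, ← Fin.sum_univ_eq_sum_range, Matrix.sum_mulVec]
  simp only [smul_mulVec]

theorem krylov_map {S : Type*} [CommRing S] (φ : R →+* S) :
    krylov (N.map φ) (fun j => φ (w j)) = (krylov N w).map φ := by
  ext i j
  simp only [krylov, of_apply, map_apply, ← Matrix.map_pow, RingHom.map_mulVec]
  rfl

end Krylov

section Cyclic

variable {F : Type*} [Field F] {n : ℕ} {N : Matrix (Fin n) (Fin n) F} {w : Fin n → F}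

theorem isUnit_krylov_of_span_eq_top
    (hw : Submodule.span F (Set.range fun j : Fin n => N ^ (j : ℕ) *ᵥ w) = ⊤) :
    IsUnit (krylov N w) := by
  rw [← linearIndependent_cols_iff_isUnit]
  exact linearIndependent_of_top_le_span_of_card_eq_finrank hw.ge (by simp)

theorem exists_aeval_mulVec_eq_of_span_eq_top
    (hw : Submodule.span F (Set.range fun j : Fin n => N ^ (j : ℕ) *ᵥ w) = ⊤) (u : Fin n → F) :
    ∃ Q : F[X], aeval N Q *ᵥ w = u := by
  obtain ⟨c, rfl⟩ :=
    (Submodule.mem_span_range_iff_exists_fun F).mp (hw ▸ Submodule.mem_top (x := u))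
  refine ⟨∑ j : Fin n, monomial j (c j), ?_⟩
  simp [Matrix.sum_mulVec, aeval_monomial, Algebra.algebraMap_eq_smul_one, Matrix.smul_mulVec]

theorem eq_zero_of_aeval_mulVec_eq_zero (hN : IsUnit (krylov N w)) {P : F[X]}
    (hP : P.degree < n) (h : aeval N P *ᵥ w = 0) : P = 0 := by
  by_contra hP0
  have hcoeff := mulVec_injective_iff_isUnit.mpr hN
    ((aeval_mulVec_eq_krylov_mulVec N w ((natDegree_lt_iff_degree_lt hP0).mpr hP)).symm.trans
      (h.trans (mulVec_zero _).symm))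
  refine hP0 (ext fun k => ?_)
  by_cases hk : k < n
  · exact congrFun hcoeff ⟨k, hk⟩
  · exact coeff_eq_zero_of_degree_lt (hP.trans_le (by exact_mod_cast not_lt.mp hk))

theorem aeval_mulVec_eq_zero_iff_dvd (hN : IsUnit (krylov N w)) {q : F[X]} (hq : q.Monic)
    (hqn : q.natDegree ≤ n) (hq0 : aeval N q = 0) (P : F[X]) :
    aeval N P *ᵥ w = 0 ↔ q ∣ P := by
  rw [← modByMonic_eq_zero_iff_dvd hq, ← aeval_modByMonic_eq_self_of_root hq0]
  refine ⟨eq_zero_of_aeval_mulVec_eq_zero hN ?_, fun h => by simp [h]⟩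
  exact (degree_modByMonic_lt P hq).trans_le (degree_le_of_natDegree_le hqn)

end Cyclic

section BaseChange

variable {R S : Type*} [CommRing R] [CommRing S] (φ : R →+* S) {n : ℕ}

theorem aeval_map_map (M : Matrix (Fin n) (Fin n) R) (Q : R[X]) :
    aeval (M.map φ) (Q.map φ) = (aeval M Q).map φ :=
  (map_aeval_eq_aeval_map (ψ := φ.mapMatrix)
    (by ext r : 1; simp [algebraMap_eq_diagonal]) Q M).symm

theorem aeval_map_mulVec_map (M : Matrix (Fin n) (Fin n) R) (v : Fin n → R) (Q : R[X]) :
    aeval (M.map φ) (Q.map φ) *ᵥ (fun j => φ (v j)) = fun i => φ ((aeval M Q *ᵥ v) i) := by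
  ext i
  rw [aeval_map_map, RingHom.map_mulVec]
  rfl

end BaseChange

theorem Matrix.natDegree_minpoly_le {K : Type*} [Field K] {n : ℕ} (M : Matrix (Fin n) (Fin n) K) :
    (minpoly K M).natDegree ≤ n := by
  simpa [charpoly_natDegree_eq_dim] using
    natDegree_le_of_dvd (minpoly_dvd_charpoly M) (charpoly_monic M).ne_zero

section CyclicCode

variable {K L : Type*} [Field K] [Field L] (φ : K →+* L) {n : ℕ}
  {M : Matrix (Fin n) (Fin n) K} {v : Fin n → K}

theorem aeval_map_mulVec_eq_zero_iff_dvd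
    (hv : Submodule.span K (Set.range fun j : Fin n => M ^ (j : ℕ) *ᵥ v) = ⊤) (P : L[X]) :
    aeval (M.map φ) P *ᵥ (fun j => φ (v j)) = 0 ↔ (minpoly K M).map φ ∣ P := by
  have hmonic := minpoly.monic (Matrix.isIntegral M)
  refine aeval_mulVec_eq_zero_iff_dvd ?_ (hmonic.map φ) ?_ ?_ P
  · rw [krylov_map]
    exact (isUnit_krylov_of_span_eq_top hv).map φ.mapMatrix
  · rw [hmonic.natDegree_map]
    exact M.natDegree_minpoly_le
  · rw [aeval_map_map, minpoly.aeval, Matrix.map_zero _ (map_zero φ)]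

theorem exists_aeval_mul_mulVec_ne_zero_mem_range_iff
    (hv : Submodule.span K (Set.range fun j : Fin n => M ^ (j : ℕ) *ᵥ v) = ⊤)
    {g : L[X]} (hg : g ∣ (minpoly K M).map φ) :
    (∃ P : L[X], aeval (M.map φ) (g * P) *ᵥ (fun j => φ (v j)) ≠ 0 ∧
        ∀ j, (aeval (M.map φ) (g * P) *ᵥ (fun j => φ (v j))) j ∈ Set.range φ) ↔
      ∃ Q : K[X], ¬ minpoly K M ∣ Q ∧ g ∣ Q.map φ := by
  have hker (Q : K[X]) : aeval M Q *ᵥ v = 0 ↔ minpoly K M ∣ Q := by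
    rw [← map_dvd_map' φ, ← aeval_map_mulVec_eq_zero_iff_dvd φ hv, aeval_map_mulVec_map,
      funext_iff, funext_iff]
    simp
  constructor
  · rintro ⟨P, hP0, hPrange⟩
    choose u hu using hPrange
    obtain ⟨Q, hQ⟩ := exists_aeval_mulVec_eq_of_span_eq_top hv u
    have hPQ : aeval (M.map φ) (g * P) *ᵥ (fun j => φ (v j)) =
        aeval (M.map φ) (Q.map φ) *ᵥ (fun j => φ (v j)) := by
      rw [aeval_map_mulVec_map, hQ]
      exact funext fun j => (hu j).symm
    refine ⟨Q, fun hQ0 => hP0 ?_, ?_⟩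
    · rw [hPQ, aeval_map_mulVec_map, (hker Q).mpr hQ0]
      exact funext fun _ => map_zero φ
    · have hdiff := (aeval_map_mulVec_eq_zero_iff_dvd φ hv (g * P - Q.map φ)).mp
        (by rw [map_sub, sub_mulVec, hPQ, sub_self])
      simpa using dvd_sub (dvd_mul_right g P) (hg.trans hdiff)
  · rintro ⟨Q, hQ, P, hP⟩
    refine ⟨P, ?_, fun j => ?_⟩ <;> rw [← hP, aeval_map_mulVec_map]
    · exact fun h => hQ ((hker Q).mp (funext fun i => φ.injective (by simpa using congrFun h i)))
    · exact ⟨_, rfl⟩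

end CyclicCode

section Factorization

variable {K L : Type*} [Field K] [Field L] (φ : K →+* L)

theorem dvd_map_pow_sub_one_of_not_pow_dvd {p Q : K[X]} (hp : Irreducible p) {h : L[X]} {m : ℕ}
    (hh : h ∣ p.map φ ^ m) (hQ : h ∣ Q.map φ) (hpQ : ¬ p ^ m ∣ Q) : h ∣ p.map φ ^ (m - 1) := by
  have hQ0 : Q ≠ 0 := by
    rintro rfl
    exact hpQ (dvd_zero _)
  obtain ⟨a, R, hpR, rfl⟩ := WfDvdMonoid.max_power_factor hQ0 hp
  have ha : a < m := not_le.mp fun ham => hpQ (dvd_mul_of_dvd_left (pow_dvd_pow p ham) R)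
  have hcop : IsCoprime h (R.map φ) :=
    (((hp.coprime_iff_not_dvd.mpr hpR).map (mapRingHom φ)).pow_left).of_isCoprime_of_dvd_left hh
  rw [Polynomial.map_mul, Polynomial.map_pow] at hQ
  exact (hcop.dvd_of_dvd_mul_right hQ).trans (pow_dvd_pow _ (by omega))

theorem Polynomial.Monic.isCoprime_of_irreducible {p q : K[X]} (hp : p.Monic) (hq : q.Monic)
    (hpi : Irreducible p) (hqi : Irreducible q) (hpq : p ≠ q) : IsCoprime p q :=
  hpi.coprime_iff_not_dvd.mpr fun hdvd =>
    hpq (eq_of_monic_of_associated hp hq (hpi.associated_of_dvd hqi hdvd))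

variable {s : ℕ} {f : Fin s → K[X]} {m : Fin s → ℕ} {gi : Fin s → L[X]}

theorem exists_dvd_map_pow_sub_one (hmonic : ∀ i, (f i).Monic) (hirr : ∀ i, Irreducible (f i))
    (hdist : Function.Injective f) (hgi : ∀ i, gi i ∣ (f i).map φ ^ m i) {Q : K[X]}
    (hQ : ¬ ∏ i, f i ^ m i ∣ Q) (hgQ : ∏ i, gi i ∣ Q.map φ) :
    ∃ i, gi i ∣ (f i).map φ ^ (m i - 1) := by
  have hcop : Set.Pairwise (Finset.univ : Finset (Fin s))
      fun j k => IsCoprime (f j ^ m j) (f k ^ m k) := fun j _ k _ hjk =>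
      ((hmonic j).isCoprime_of_irreducible (hmonic k) (hirr j) (hirr k) (hdist.ne hjk)).pow
  obtain ⟨i, hi⟩ : ∃ i, ¬ f i ^ m i ∣ Q := by
    by_contra! hall
    exact hQ (Finset.prod_dvd_of_coprime hcop fun i _ => hall i)
  exact ⟨i, dvd_map_pow_sub_one_of_not_pow_dvd φ (hirr i) (hgi i)
    ((Finset.dvd_prod_of_mem gi (Finset.mem_univ i)).trans hgQ) hi⟩

theorem exists_not_dvd_prod_pow_and_dvd_map (hirr : ∀ i, Irreducible (f i)) (hm : ∀ i, 1 ≤ m i)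
    (hgi : ∀ i, gi i ∣ (f i).map φ ^ m i) {i : Fin s} (hi : gi i ∣ (f i).map φ ^ (m i - 1)) :
    ∃ Q : K[X], ¬ ∏ j, f j ^ m j ∣ Q ∧ ∏ j, gi j ∣ Q.map φ := by
  classical
  set Q := f i ^ (m i - 1) * ∏ j ∈ Finset.univ.erase i, f j ^ m j
  have hfQ : ∏ j, f j ^ m j = f i * Q := by
    rw [← Finset.mul_prod_erase _ _ (Finset.mem_univ i), ← mul_assoc, ← pow_succ',
      Nat.sub_add_cancel (hm i)]
  have hQ0 : Q ≠ 0 := by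
    refine mul_ne_zero (pow_ne_zero _ (hirr i).ne_zero) (Finset.prod_ne_zero_iff.mpr ?_)
    exact fun j _ => pow_ne_zero _ (hirr j).ne_zero
  refine ⟨Q, fun hdvd => (hirr i).not_isUnit (isUnit_of_dvd_one ?_), ?_⟩
  · rw [hfQ] at hdvd
    exact (mul_dvd_mul_iff_right hQ0).mp (by simpa using hdvd)
  · rw [← Finset.mul_prod_erase _ _ (Finset.mem_univ i), Polynomial.map_mul, Polynomial.map_pow,
      Polynomial.map_prod]
    refine mul_dvd_mul hi (Finset.prod_dvd_prod_of_dvd _ _ fun j _ => ?_)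
    simpa using hgi j

end Factorization

theorem stmt8_general {K L : Type*} [Field K] [Field L] [Algebra K L] {n s : ℕ}
    (M : Matrix (Fin n) (Fin n) K) (v : Fin n → K)
    (hv : Submodule.span K (Set.range fun i : Fin n => (M ^ (i : ℕ)).mulVec v) = ⊤)
    (f : Fin s → Polynomial K) (m : Fin s → ℕ)
    (hmonic : ∀ i, (f i).Monic) (hirr : ∀ i, Irreducible (f i))
    (hdist : Function.Injective f) (hm : ∀ i, 1 ≤ m i)
    (hmin : minpoly K M = ∏ i, f i ^ m i)
    (g : Polynomial L)
    (hgdvd : g ∣ (minpoly K M).map (algebraMap K L))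
    (gi : Fin s → Polynomial L)
    (hgprod : g = ∏ i, gi i)
    (hgi : ∀ i, gi i ∣ ((f i).map (algebraMap K L)) ^ m i)
    (Cg : Submodule L (Fin n → L))
    (hCg : (Cg : Set (Fin n → L)) = {c : Fin n → L | ∃ P : Polynomial L,
      c = (Polynomial.aeval (M.map (algebraMap K L)) (g * P)).mulVec
        (fun j => algebraMap K L (v j))}) :
    (∃ c ∈ Cg, c ≠ 0 ∧ ∀ j, c j ∈ Set.range (algebraMap K L)) ↔
      ∃ i, gi i ∣ ((f i).map (algebraMap K L)) ^ (m i - 1) := by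
  have hcode : (∃ c ∈ Cg, c ≠ 0 ∧ ∀ j, c j ∈ Set.range (algebraMap K L)) ↔
      ∃ P : L[X], aeval (M.map (algebraMap K L)) (g * P) *ᵥ (fun j => algebraMap K L (v j)) ≠ 0 ∧
        ∀ j, (aeval (M.map (algebraMap K L)) (g * P) *ᵥ (fun j => algebraMap K L (v j))) j ∈
          Set.range (algebraMap K L) := by
    simp only [← SetLike.mem_coe, hCg, Set.mem_ofPred_eq]
    exact ⟨fun ⟨_, ⟨P, hP⟩, hc⟩ => ⟨P, hP ▸ hc⟩, fun ⟨P, hc⟩ => ⟨_, ⟨P, rfl⟩, hc⟩⟩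
  rw [hcode, exists_aeval_mul_mulVec_ne_zero_mem_range_iff _ hv hgdvd, hmin, hgprod]
  exact ⟨fun ⟨_, hQ, hgQ⟩ => exists_dvd_map_pow_sub_one _ hmonic hirr hdist hgi hQ hgQ,
    fun ⟨_, hi⟩ => exists_not_dvd_prod_pow_and_dvd_map _ hirr hm hgi hi⟩

/-- The `M`-cyclic code `C_g` contains a nonzero vector of `K^n` if and only if
`gᵢ ∣ fᵢ^{mᵢ−1}` for some `i`. -/
theorem stmt8 {K L : Type*} [Field K] [Field L] [Algebra K L] {n s : ℕ}
    (M : Matrix (Fin n) (Fin n) K) (v : Fin n → K)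
    (hv : Submodule.span K (Set.range fun i : Fin n => (M ^ (i : ℕ)).mulVec v) = ⊤)
    (f : Fin s → Polynomial K) (m : Fin s → ℕ)
    (hmonic : ∀ i, (f i).Monic) (hirr : ∀ i, Irreducible (f i))
    (hdist : Function.Injective f) (hm : ∀ i, 1 ≤ m i)
    (hmin : minpoly K M = ∏ i, f i ^ m i)
    (g : Polynomial L) (hgmonic : g.Monic)
    (hgdvd : g ∣ (minpoly K M).map (algebraMap K L))
    (gi : Fin s → Polynomial L) (hgimonic : ∀ i, (gi i).Monic)
    (hgprod : g = ∏ i, gi i)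
    (hgi : ∀ i, gi i ∣ ((f i).map (algebraMap K L)) ^ m i)
    (Cg : Submodule L (Fin n → L))
    (hCg : (Cg : Set (Fin n → L)) = {c : Fin n → L | ∃ P : Polynomial L,
      c = (Polynomial.aeval (M.map (algebraMap K L)) (g * P)).mulVec
        (fun j => algebraMap K L (v j))}) :
    (∃ c ∈ Cg, c ≠ 0 ∧ ∀ j, c j ∈ Set.range (algebraMap K L)) ↔
      ∃ i, gi i ∣ ((f i).map (algebraMap K L)) ^ (m i - 1) :=
  stmt8_general M v hv f m hmonic hirr hdist hm hmin g hgdvd gi hgprod hgi Cg hCg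
end

section
/- Let L/K be a finite field extension and let C ⊆ L^n be an L-linear code of dimension k. Then the last generalized rank weight satisfies M_k(C) = n − dim_K(C^⊥ ∩ K^n), where C^⊥ is the dual with respect to the standard bilinear form on L^n. -/
/-!
For `w ∈ K^n` and a `K`-linear `φ : L → K` one has `φ (w ⬝ᵥ c) = (φ ∘ c) ⬝ᵥ w`. Since the
functionals `φ` separate the points of `L`, a `K`-rational `w` is orthogonal to `C` exactly when
it is orthogonal in `K^n` to the rank support, i.e. `C^⊥ ∩ K^n = Rsupp(C)^⊥`. The dot product on
`K^n` is nondegenerate, so `Rsupp(C) = (C^⊥ ∩ K^n)^⊥` has dimension `n - dim_K (C^⊥ ∩ K^n)`.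
-/

open Polynomial Matrix

open Module LinearMap.BilinForm

namespace Matrix

theorem dotProductBilin_isRefl (R ι : Type*) [CommSemiring R] [Fintype ι] :
    (dotProductBilin R R : LinearMap.BilinForm R (ι → R)).IsRefl :=
  fun x y h => by simpa [dotProduct_comm] using h

theorem dotProductBilin_nondegenerate (R ι : Type*) [CommRing R] [Fintype ι] :
    (dotProductBilin R R : LinearMap.BilinForm R (ι → R)).Nondegenerate := by
  classical
  refine (dotProductBilin_isRefl R ι).nondegenerate_iff_separatingLeft.mpr fun v hv => ?_
  funext i
  simpa using hv (Pi.single i 1)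

end Matrix

theorem dotProduct_comp_eq_map_dotProduct {K L ι : Type*} [CommSemiring K] [Semiring L]
    [Algebra K L] [Fintype ι] (φ : L →ₗ[K] K) (c : ι → L) (w : ι → K) :
    (fun j => φ (c j)) ⬝ᵥ w = φ ((fun j => algebraMap K L (w j)) ⬝ᵥ c) := by
  simp only [dotProduct, map_sum]
  refine Finset.sum_congr rfl fun j _ => ?_
  rw [← Algebra.smul_def, map_smul, smul_eq_mul, mul_comm]

section RankSupport

variable (K : Type*) {L : Type*} [Field K] [Field L] [Algebra K L] {n : ℕ}

/-- The rank support `Rsupp(C)`: the rows of the coordinate matrix `M_B(c)` are the vectors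
`(b_i^* (c_j))_j` for the dual basis `b^*` of `B`, and the `b_i^*` span all of `L →ₗ[K] K`. -/
def rankSupport (C : Submodule L (Fin n → L)) : Submodule K (Fin n → K) :=
  Submodule.span K {w | ∃ φ : L →ₗ[K] K, ∃ c ∈ C, w = fun j => φ (c j)}

theorem mem_orthogonal_rankSupport_iff (C : Submodule L (Fin n → L)) (w : Fin n → K) :
    w ∈ orthogonal (dotProductBilin K K) (rankSupport K C) ↔
      ∀ c ∈ C, (fun j => algebraMap K L (w j)) ⬝ᵥ c = 0 := by
  change rankSupport K C ≤ LinearMap.ker ((dotProductBilin K K).flip w) ↔ _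
  rw [rankSupport, Submodule.span_le]
  refine ⟨fun h c hc => (forall_dual_apply_eq_zero_iff K _).mp fun φ => ?_, ?_⟩
  · rw [← dotProduct_comp_eq_map_dotProduct]
    exact h ⟨φ, c, hc, rfl⟩
  · rintro h _ ⟨φ, c, hc, rfl⟩
    change _ ⬝ᵥ w = 0
    rw [dotProduct_comp_eq_map_dotProduct, h c hc, map_zero]

theorem rankSupport_eq_orthogonal_span_dual (C : Submodule L (Fin n → L)) :
    rankSupport K C = orthogonal (dotProductBilin K K)
      (Submodule.span K {w | ∀ c ∈ C, (fun j => algebraMap K L (w j)) ⬝ᵥ c = 0}) := by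
  have hdual : {w | ∀ c ∈ C, (fun j => algebraMap K L (w j)) ⬝ᵥ c = 0} =
      (orthogonal (dotProductBilin K K) (rankSupport K C) : Set (Fin n → K)) :=
    Set.ext fun w => (mem_orthogonal_rankSupport_iff K C w).symm
  rw [hdual, Submodule.span_eq, orthogonal_orthogonal (dotProductBilin_nondegenerate K _)
    (dotProductBilin_isRefl K _)]

end RankSupport

theorem stmt17_general {K L : Type*} [Field K] [Field L] [Algebra K L]
    {n : ℕ} (C : Submodule L (Fin n → L)) :
    Module.finrank K
      (Submodule.span K {w : Fin n → K | ∃ φ : L →ₗ[K] K, ∃ c ∈ C, w = fun j => φ (c j)})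
      = n - Module.finrank K
        (Submodule.span K {w : Fin n → K |
          ∀ c ∈ C, (fun j => algebraMap K L (w j)) ⬝ᵥ c = 0}) := by
  change finrank K (rankSupport K C) = _
  rw [rankSupport_eq_orthogonal_span_dual, finrank_orthogonal (dotProductBilin_nondegenerate K _),
    finrank_fin_fun]

/-- The last generalized rank weight of a linear code `C ⊆ L^n` of dimension `k`
satisfies `M_k(C) = n − dim_K (C^⊥ ∩ K^n)`.  Here `M_k(C) = wt_R(C)` is the
`K`-dimension of the rank support of `C`, described basis-freely as the `K`-span of
the vectors `(φ(c₁),…,φ(c_n))` for `φ : L →ₗ[K] K` and `c ∈ C`, while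
`C^⊥ ∩ K^n ⊆ K^n` consists of the `K`-rational vectors orthogonal to `C`. -/
theorem stmt17 {K L : Type*} [Field K] [Field L] [Algebra K L] [FiniteDimensional K L]
    {n k : ℕ} (C : Submodule L (Fin n → L)) (hk : Module.finrank L C = k) :
    Module.finrank K
      (Submodule.span K {w : Fin n → K | ∃ φ : L →ₗ[K] K, ∃ c ∈ C, w = fun j => φ (c j)})
      = n - Module.finrank K
        (Submodule.span K {w : Fin n → K |
          ∀ c ∈ C, (fun j => algebraMap K L (w j)) ⬝ᵥ c = 0}) :=
  stmt17_general C
end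

section
/- Let L/K be a field extension and M ∈ M_n(K) a cyclic matrix with square-free minimal polynomial f = f₁⋯f_s, the f_i pairwise distinct monic irreducible over K. Let g ∈ L[x] be a monic divisor of f and I = {i : gcd(g, f_i) ≠ 1 in L[x]}. Then g·L[x] ∩ K[x] = (∏_{i∈I} f_i)·K[x]. -/
/-!
Coprimality survives extension of scalars. If `g ∣ p` in `L[x]` and `i ∈ I`, then `fᵢ ∣ p`:
otherwise the irreducible `fᵢ` is coprime to `p` in `K[x]`, hence in `L[x]`, and then `g` would
be coprime to `fᵢ`. The `fᵢ` being pairwise coprime, their product over `I` divides `p`.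
Conversely `g` divides `∏ᵢ fᵢ` and is coprime to each `fᵢ` with `i ∉ I`, so it divides
`∏_{i ∈ I} fᵢ`, which divides `p`.
-/

open Polynomial

theorem Polynomial.pairwise_isCoprime_of_monic_of_irreducible {K ι : Type*} [Field K]
    {f : ι → K[X]} (hmonic : ∀ i, (f i).Monic) (hirr : ∀ i, Irreducible (f i))
    (hinj : Function.Injective f) : Pairwise fun i j => IsCoprime (f i) (f j) := fun i j hij =>
  (hirr i).coprime_iff_not_dvd.2 fun hdvd => hij <| hinj <|
    eq_of_monic_of_associated (hmonic i) (hmonic j) ((hirr i).associated_of_dvd (hirr j) hdvd)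

theorem Polynomial.dvd_of_dvd_map_of_not_isCoprime {K L : Type*} [Field K] [CommRing L]
    (φ : K →+* L) {p q : K[X]} (hq : Irreducible q) {g : L[X]} (hgp : g ∣ p.map φ)
    (hgq : ¬IsCoprime g (q.map φ)) : q ∣ p :=
  hq.dvd_iff_not_isCoprime.2 fun hqp =>
    hgq <| (hqp.map (mapRingHom φ)).symm.of_isCoprime_of_dvd_left hgp

theorem dvd_prod_of_dvd_prod_of_isCoprime {R ι : Type*} [CommSemiring R] [Fintype ι]
    [DecidableEq ι] {g : R} {F : ι → R} (I : Finset ι) (h : g ∣ ∏ i, F i)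
    (hcop : ∀ i ∉ I, IsCoprime g (F i)) : g ∣ ∏ i ∈ I, F i := by
  rw [← Finset.prod_mul_prod_compl I] at h
  exact (IsCoprime.prod_right fun i hi => hcop i (Finset.mem_compl.1 hi)).dvd_of_dvd_mul_right h

theorem stmt18_general {K L : Type*} [Field K] [Field L] [Algebra K L] {n s : ℕ}
    (M : Matrix (Fin n) (Fin n) K)
    (f : Fin s → Polynomial K)
    (hmonic : ∀ i, (f i).Monic) (hirr : ∀ i, Irreducible (f i))
    (hdist : Function.Injective f)
    (hmin : minpoly K M = ∏ i, f i)
    (g : Polynomial L)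
    (hgdvd : g ∣ (minpoly K M).map (algebraMap K L))
    (I : Finset (Fin s))
    (hI : ∀ i, i ∈ I ↔ ¬ IsCoprime g ((f i).map (algebraMap K L))) :
    ∀ p : Polynomial K,
      g ∣ p.map (algebraMap K L) ↔ (∏ i ∈ I, f i) ∣ p := by
  intro p
  constructor
  · intro hgp
    exact Finset.prod_dvd_of_coprime
      ((pairwise_isCoprime_of_monic_of_irreducible hmonic hirr hdist).set_pairwise _)
      fun i hi => dvd_of_dvd_map_of_not_isCoprime _ (hirr i) hgp ((hI i).1 hi)
  · intro hp
    have hg : g ∣ ∏ i, (f i).map (algebraMap K L) := by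
      rwa [hmin, Polynomial.map_prod] at hgdvd
    refine (dvd_prod_of_dvd_prod_of_isCoprime I hg fun i hi => not_not.1 (mt (hI i).2 hi)).trans ?_
    simpa only [Polynomial.map_prod] using Polynomial.map_dvd (algebraMap K L) hp

/-- If `M` is a cyclic matrix with square-free minimal polynomial `f = f₁⋯f_s`,
`g ∈ L[x]` a monic divisor of `f`, and `I = {i : gcd(g,fᵢ) ≠ 1}` in `L[x]`, then
`g·L[x] ∩ K[x] = (∏_{i∈I} fᵢ)·K[x]`. -/
theorem stmt18 {K L : Type*} [Field K] [Field L] [Algebra K L] {n s : ℕ}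
    (M : Matrix (Fin n) (Fin n) K)
    (hcyc : ∃ v : Fin n → K,
      Submodule.span K (Set.range fun i : Fin n => (M ^ (i : ℕ)).mulVec v) = ⊤)
    (f : Fin s → Polynomial K)
    (hmonic : ∀ i, (f i).Monic) (hirr : ∀ i, Irreducible (f i))
    (hdist : Function.Injective f)
    (hmin : minpoly K M = ∏ i, f i)
    (g : Polynomial L) (hgmonic : g.Monic)
    (hgdvd : g ∣ (minpoly K M).map (algebraMap K L))
    (I : Finset (Fin s))
    (hI : ∀ i, i ∈ I ↔ ¬ IsCoprime g ((f i).map (algebraMap K L))) :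
    ∀ p : Polynomial K,
      g ∣ p.map (algebraMap K L) ↔ (∏ i ∈ I, f i) ∣ p :=
  stmt18_general M f hmonic hirr hdist hmin g hgdvd I hI
end
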